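/- arXiv:2007.10810 — 2 statements merged into one kernel-verified Lean document; each statement's English description precedes it below -/
import Mathlib

section
/- The deficiency graph of a pentagonal geometry PENT(k,r) is k-regular, and the connected component of any point belonging to an opposite line pair is a complete bipartite graph K_{k,k}; every other connected component has girth at least 5. -/
open scoped Classical

/-- A pentagonal geometry PENT(k,r). -/
structure PentGeom (V : Type) [Fintype V] [DecidableEq V] (k r : ℕ) : Type where
  lines : Finset (Finset V)
  size_pos : 2 ≤ k
  rep_pos : 1 ≤ r
  pairwise : ∀ x y : V, x ≠ y → (lines.filter (fun l => x ∈ l ∧ y ∈ l)).card ≤ 1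
  uniform : ∀ l ∈ lines, l.card = k
  regular : ∀ x : V, (lines.filter (fun l => x ∈ l)).card = r
  opp : ∀ x : V,
    (Finset.univ.filter (fun y => y ≠ x ∧ ∀ l ∈ lines, ¬(x ∈ l ∧ y ∈ l))) ∈ lines

variable {V : Type} [Fintype V] [DecidableEq V] {k r : ℕ}

/-- The opposite line of a point. -/
def PentGeom.oppLine (P : PentGeom V k r) (x : V) : Finset V :=
  Finset.univ.filter (fun y => y ≠ x ∧ ∀ l ∈ P.lines, ¬(x ∈ l ∧ y ∈ l))

/-- Two points are collinear if some line contains both. -/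
def PentGeom.Collinear (P : PentGeom V k r) (x y : V) : Prop :=
  x ≠ y ∧ ∃ l ∈ P.lines, x ∈ l ∧ y ∈ l

/-- An opposite line pair. -/
def PentGeom.OppPair (P : PentGeom V k r) (l m : Finset V) : Prop :=
  l ∈ P.lines ∧ m ∈ P.lines ∧ l ≠ m ∧
    (∀ x ∈ l, P.oppLine x = m) ∧ (∀ y ∈ m, P.oppLine y = l)

/-- The deficiency graph: two points adjacent iff distinct and not collinear. -/
def PentGeom.deficiencyGraph (P : PentGeom V k r) : SimpleGraph V where
  Adj x y := x ≠ y ∧ ¬ P.Collinear x y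
  symm := by
    constructor
    intro x y h
    refine ⟨h.1.symm, fun hc => h.2 ⟨h.1, ?_⟩⟩
    obtain ⟨hne, l, hl, hyl, hxl⟩ := hc
    exact ⟨l, hl, hxl, hyl⟩
  loopless := by constructor; intro x h; exact h.1 rfl

/-!
Adjacency to `x` in the deficiency graph means membership in `x^opp`, so the graph is `k`-regular
and triangle-free: two neighbours of `x` lie on the line `x^opp`. For a `4`-cycle `x a y b`,
uniqueness of the line through two points gives `x^opp = y^opp` (both contain `a, b`) and
`a^opp = b^opp` (both contain `x, y`). Hence every point of `a^opp` has `a` and `b` on its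
opposite line, which is therefore `x^opp`, and symmetrically; so `x` lies in an opposite line pair.
-/

namespace SimpleGraph.Walk

variable {α : Type*} {G : SimpleGraph α} {x : α} {c : G.Walk x x}

lemma exists_adj_of_length_eq_three (h : c.length = 3) :
    ∃ a b, G.Adj x a ∧ G.Adj a b ∧ G.Adj b x := by
  refine ⟨c.getVert 1, c.getVert 2, ?_, ?_, ?_⟩
  · simpa using c.adj_getVert_succ (i := 0) (by omega)
  · exact c.adj_getVert_succ (by omega)
  · simpa [← h] using c.adj_getVert_succ (i := 2) (by omega)

lemma IsCycle.exists_adj_of_length_eq_four (hc : c.IsCycle) (h : c.length = 4) :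
    ∃ a y b, x ≠ y ∧ a ≠ b ∧ G.Adj x a ∧ G.Adj a y ∧ G.Adj y b ∧ G.Adj b x := by
  refine ⟨c.getVert 1, c.getVert 2, c.getVert 3, ?_, ?_, ?_, ?_, ?_, ?_⟩
  · intro hxy
    have := hc.getVert_injOn' (x₁ := 0) (x₂ := 2) (by simp [h]) (by simp [h])
      (by simpa using hxy)
    omega
  · intro hab
    have := hc.getVert_injOn (x₁ := 1) (x₂ := 3) (by simp [h]) (by simp [h]) hab
    omega
  · simpa using c.adj_getVert_succ (i := 0) (by omega)
  · exact c.adj_getVert_succ (by omega)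
  · exact c.adj_getVert_succ (by omega)
  · simpa [← h] using c.adj_getVert_succ (i := 3) (by omega)

end SimpleGraph.Walk

namespace PentGeom

variable (P : PentGeom V k r) {a b x y z : V} {l m : Finset V}

lemma mem_oppLine :
    y ∈ P.oppLine x ↔ y ≠ x ∧ ∀ l ∈ P.lines, ¬(x ∈ l ∧ y ∈ l) := by
  simp [oppLine]

lemma oppLine_mem_lines (x : V) : P.oppLine x ∈ P.lines := P.opp x

lemma not_mem_oppLine_self (x : V) : x ∉ P.oppLine x := fun h => (P.mem_oppLine.mp h).1 rfl

lemma deficiencyGraph_adj : P.deficiencyGraph.Adj x y ↔ y ∈ P.oppLine x := by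
  rw [P.mem_oppLine]
  constructor
  · rintro ⟨hne, hnc⟩
    exact ⟨hne.symm, fun l hl ⟨hx, hy⟩ => hnc ⟨hne, l, hl, hx, hy⟩⟩
  · rintro ⟨hne, h⟩
    exact ⟨hne.symm, fun ⟨_, l, hl, hx, hy⟩ => h l hl ⟨hx, hy⟩⟩

lemma mem_oppLine_comm : y ∈ P.oppLine x ↔ x ∈ P.oppLine y := by
  rw [← deficiencyGraph_adj, ← deficiencyGraph_adj, SimpleGraph.adj_comm]

lemma filter_deficiencyGraph_adj_eq_oppLine (x : V) :
    Finset.univ.filter (P.deficiencyGraph.Adj x) = P.oppLine x := by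
  ext y
  simp [deficiencyGraph_adj]

lemma card_filter_deficiencyGraph_adj (x : V) :
    (Finset.univ.filter (P.deficiencyGraph.Adj x)).card = k := by
  rw [filter_deficiencyGraph_adj_eq_oppLine]
  exact P.uniform _ (P.oppLine_mem_lines x)

lemma eq_of_mem_of_mem (hab : a ≠ b) (hl : l ∈ P.lines) (hm : m ∈ P.lines)
    (hal : a ∈ l) (hbl : b ∈ l) (ham : a ∈ m) (hbm : b ∈ m) : l = m :=
  Finset.card_le_one.mp (P.pairwise a b hab) l (by simp [hl, hal, hbl]) m (by simp [hm, ham, hbm])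

lemma oppLine_eq_of_mem_of_mem (hab : a ≠ b) (haz : a ∈ P.oppLine z) (hbz : b ∈ P.oppLine z)
    (hax : a ∈ P.oppLine x) (hbx : b ∈ P.oppLine x) : P.oppLine z = P.oppLine x :=
  P.eq_of_mem_of_mem hab (P.oppLine_mem_lines z) (P.oppLine_mem_lines x) haz hbz hax hbx

lemma not_adj_of_adj_of_adj (hxa : P.deficiencyGraph.Adj x a) (hxb : P.deficiencyGraph.Adj x b) :
    ¬ P.deficiencyGraph.Adj a b := fun hab =>
  hab.2 ⟨hab.1, P.oppLine x, P.oppLine_mem_lines x,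
    P.deficiencyGraph_adj.mp hxa, P.deficiencyGraph_adj.mp hxb⟩

lemma oppPair_of_four_cycle (hxy : x ≠ y) (hab : a ≠ b)
    (hxa : P.deficiencyGraph.Adj x a) (hay : P.deficiencyGraph.Adj a y)
    (hyb : P.deficiencyGraph.Adj y b) (hbx : P.deficiencyGraph.Adj b x) :
    P.OppPair (P.oppLine a) (P.oppLine x) := by
  have hax : a ∈ P.oppLine x := P.deficiencyGraph_adj.mp hxa
  have hbx : b ∈ P.oppLine x := P.deficiencyGraph_adj.mp hbx.symm
  have hay : a ∈ P.oppLine y := P.deficiencyGraph_adj.mp hay.symm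
  have hby : b ∈ P.oppLine y := P.deficiencyGraph_adj.mp hyb
  have hxa : x ∈ P.oppLine a := P.mem_oppLine_comm.mp hax
  have hya : y ∈ P.oppLine a := P.mem_oppLine_comm.mp hay
  have hyx : P.oppLine y = P.oppLine x := P.oppLine_eq_of_mem_of_mem hab hay hby hax hbx
  have hba : P.oppLine b = P.oppLine a := P.oppLine_eq_of_mem_of_mem hxy
    (P.mem_oppLine_comm.mp hbx) (P.mem_oppLine_comm.mp hby) hxa hya
  refine ⟨P.oppLine_mem_lines a, P.oppLine_mem_lines x, fun h => ?_,
    fun z hz => ?_, fun z hz => ?_⟩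
  · exact P.not_mem_oppLine_self x (h ▸ hxa)
  · exact P.oppLine_eq_of_mem_of_mem hab (P.mem_oppLine_comm.mp hz)
      (P.mem_oppLine_comm.mp (hba ▸ hz)) hax hbx
  · exact P.oppLine_eq_of_mem_of_mem hxy (P.mem_oppLine_comm.mp hz)
      (P.mem_oppLine_comm.mp (hyx ▸ hz)) hxa hya

lemma five_le_length_of_isCycle
    (hx : ¬ ∃ l m : Finset V, P.OppPair l m ∧ (x ∈ l ∨ x ∈ m))
    {c : P.deficiencyGraph.Walk x x} (hc : c.IsCycle) : 5 ≤ c.length := by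
  by_contra! hlt
  obtain h | h : c.length = 3 ∨ c.length = 4 := by have := hc.three_le_length; omega
  · obtain ⟨a, b, hxa, hab, hbx⟩ := c.exists_adj_of_length_eq_three h
    exact P.not_adj_of_adj_of_adj hxa hbx.symm hab
  · obtain ⟨a, y, b, hxy, hab, hxa, hay, hyb, hbx⟩ := hc.exists_adj_of_length_eq_four h
    exact hx ⟨_, _, P.oppPair_of_four_cycle hxy hab hxa hay hyb hbx,
      Or.inl (P.mem_oppLine_comm.mp (P.deficiencyGraph_adj.mp hxa))⟩

namespace OppPair

variable {P}

lemma symm (h : P.OppPair l m) : P.OppPair m l :=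
  ⟨h.2.1, h.1, h.2.2.1.symm, h.2.2.2.2, h.2.2.2.1⟩

lemma not_mem_right_of_mem_left (h : P.OppPair l m) (hx : x ∈ l) : x ∉ m := fun hxm =>
  h.2.2.1 ((h.2.2.2.2 x hxm).symm.trans (h.2.2.2.1 x hx))

lemma deficiencyGraph_adj_iff_of_mem_left (h : P.OppPair l m) (hx : x ∈ l) :
    P.deficiencyGraph.Adj x y ↔ (x ∈ l ∧ y ∈ m) ∨ (x ∈ m ∧ y ∈ l) := by
  simp [deficiencyGraph_adj, h.2.2.2.1 x hx, hx, h.not_mem_right_of_mem_left hx]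

lemma deficiencyGraph_adj_iff (h : P.OppPair l m) (hx : x ∈ l ∪ m) :
    P.deficiencyGraph.Adj x y ↔ (x ∈ l ∧ y ∈ m) ∨ (x ∈ m ∧ y ∈ l) := by
  rcases Finset.mem_union.mp hx with hx | hx
  · exact h.deficiencyGraph_adj_iff_of_mem_left hx
  · rw [h.symm.deficiencyGraph_adj_iff_of_mem_left hx, or_comm]

end OppPair

end PentGeom

/-- The deficiency graph of a PENT(k,r) is k-regular; the connected component
of any point of an opposite line pair is the complete bipartite graph K_{k,k} on the two
lines of the pair; every other connected component has girth at least 5. -/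
theorem stmt4 (k r : ℕ) (V : Type) [Fintype V] [DecidableEq V] (P : PentGeom V k r) :
    (∀ x : V, (Finset.univ.filter (fun y => P.deficiencyGraph.Adj x y)).card = k) ∧
    (∀ l m : Finset V, P.OppPair l m →
      ∀ x ∈ l ∪ m, ∀ y : V,
        (P.deficiencyGraph.Adj x y ↔ ((x ∈ l ∧ y ∈ m) ∨ (x ∈ m ∧ y ∈ l)))) ∧
    (∀ x : V, (¬ ∃ l m : Finset V, P.OppPair l m ∧ (x ∈ l ∨ x ∈ m)) →
      ∀ c : P.deficiencyGraph.Walk x x, c.IsCycle → 5 ≤ c.length) :=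
  ⟨P.card_filter_deficiencyGraph_adj, fun _ _ h _ hx _ => h.deficiencyGraph_adj_iff hx,
    fun _ hx _ hc => P.five_le_length_of_isCycle hx hc⟩
end

section
/- There is no pentagonal geometry PENT(3,r) with exactly two opposite line pairs for r ∈ {7, 9, 10, 12}. -/
open scoped Classical

variable {V : Type} [Fintype V] [DecidableEq V] {k r : ℕ}

/-- The finset of ordered opposite line pairs; its cardinality is twice the number of
(unordered) opposite line pairs. -/
noncomputable def PentGeom.olpOrdered (P : PentGeom V k r) : Finset (Finset V × Finset V) :=
  (P.lines ×ˢ P.lines).filter (fun p => P.OppPair p.1 p.2)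

section Helpers

variable {P : PentGeom V 3 r}

lemma mem_oppLine {x y : V} :
    y ∈ P.oppLine x ↔ y ≠ x ∧ ∀ l ∈ P.lines, ¬(x ∈ l ∧ y ∈ l) := by
  simp [PentGeom.oppLine]

lemma oppLine_mem (P : PentGeom V 3 r) (x : V) : P.oppLine x ∈ P.lines := P.opp x

lemma card_oppLine (P : PentGeom V 3 r) (x : V) : (P.oppLine x).card = 3 :=
  P.uniform _ (oppLine_mem P x)

lemma oppLine_symm {x y : V} (h : y ∈ P.oppLine x) : x ∈ P.oppLine y := by
  rw [mem_oppLine] at h ⊢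
  exact ⟨h.1.symm, fun l hl hc => h.2 l hl ⟨hc.2, hc.1⟩⟩

lemma not_mem_oppLine_self (P : PentGeom V 3 r) (x : V) : x ∉ P.oppLine x :=
  fun h => (mem_oppLine.mp h).1 rfl

lemma exists_line {x y : V} (hxy : y ≠ x) (h : y ∉ P.oppLine x) :
    ∃ l ∈ P.lines, x ∈ l ∧ y ∈ l := by
  rw [mem_oppLine] at h
  push_neg at h
  exact h hxy

lemma line_unique {l l' : Finset V} (hl : l ∈ P.lines) (hl' : l' ∈ P.lines) {x y : V}
    (hxy : x ≠ y) (hx : x ∈ l) (hy : y ∈ l) (hx' : x ∈ l') (hy' : y ∈ l') : l = l' := by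
  have hp := P.pairwise x y hxy
  exact Finset.card_le_one.mp hp _ (Finset.mem_filter.2 ⟨hl, hx, hy⟩) _
    (Finset.mem_filter.2 ⟨hl', hx', hy'⟩)

lemma oppPair_symm {l m : Finset V} (h : P.OppPair l m) : P.OppPair m l :=
  ⟨h.2.1, h.1, h.2.2.1.symm, h.2.2.2.2, h.2.2.2.1⟩

lemma line_nonempty {l : Finset V} (hl : l ∈ P.lines) : l.Nonempty :=
  Finset.card_pos.mp (by rw [P.uniform l hl]; norm_num)

lemma oppPair_right_unique {l m m' : Finset V} (h : P.OppPair l m) (h' : P.OppPair l m') :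
    m = m' := by
  obtain ⟨x, hx⟩ := line_nonempty h.1
  exact (h.2.2.2.1 x hx).symm.trans (h'.2.2.2.1 x hx)

lemma oppPair_left_unique {l l' m : Finset V} (h : P.OppPair l m) (h' : P.OppPair l' m) :
    l = l' := oppPair_right_unique (oppPair_symm h) (oppPair_symm h')

lemma mem_olp {p : Finset V × Finset V} : p ∈ P.olpOrdered ↔ P.OppPair p.1 p.2 := by
  constructor
  · intro h
    exact (Finset.mem_filter.mp h).2
  · intro h
    exact Finset.mem_filter.mpr ⟨Finset.mem_product.mpr ⟨h.1, h.2.1⟩, h⟩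

end Helpers

section Main

variable {P : PentGeom V 3 r}

/-- Extraction of the two opposite line pairs. -/
lemma extract_pairs (hQ : P.olpOrdered.card = 4) :
    ∃ l1 m1 l2 m2 : Finset V, P.OppPair l1 m1 ∧ P.OppPair l2 m2 ∧
      l1 ≠ m1 ∧ l2 ≠ m2 ∧ l2 ≠ l1 ∧ l2 ≠ m1 ∧ m2 ≠ l1 ∧ m2 ≠ m1 ∧
      (∀ l m : Finset V, P.OppPair l m → m ⊆ (l1 ∪ m1) ∪ (l2 ∪ m2)) := by
  have hne : P.olpOrdered.Nonempty := by
    rw [← Finset.card_pos, hQ]; norm_num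
  obtain ⟨⟨l1, m1⟩, hp1⟩ := hne
  have h1 : P.OppPair l1 m1 := mem_olp.mp hp1
  have h1s : P.OppPair m1 l1 := oppPair_symm h1
  have hne1 : l1 ≠ m1 := h1.2.2.1
  have hp1s : (m1, l1) ∈ P.olpOrdered := mem_olp.mpr h1s
  have hQ2 : ((P.olpOrdered.erase (l1, m1)).erase (m1, l1)).card = 2 := by
    rw [Finset.card_erase_of_mem, Finset.card_erase_of_mem hp1, hQ]
    exact Finset.mem_erase.mpr ⟨fun h => hne1 (congrArg Prod.fst h).symm, hp1s⟩
  have hne2' : ((P.olpOrdered.erase (l1, m1)).erase (m1, l1)).Nonempty := by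
    rw [← Finset.card_pos, hQ2]; norm_num
  obtain ⟨⟨l2, m2⟩, hp2'⟩ := hne2'
  have hp2e := Finset.mem_erase.mp hp2'
  have hp2e2 := Finset.mem_erase.mp hp2e.2
  have h2 : P.OppPair l2 m2 := mem_olp.mp hp2e2.2
  have hne2 : l2 ≠ m2 := h2.2.2.1
  -- distinctness of the four lines
  have hll : l2 ≠ l1 := by
    intro h; subst h
    exact hp2e2.1 (by rw [oppPair_right_unique h2 h1])
  have hlm : l2 ≠ m1 := by
    intro h; subst h
    exact hp2e.1 (by rw [oppPair_right_unique h2 h1s])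
  have hml : m2 ≠ l1 := by
    intro h; subst h
    exact hlm (oppPair_right_unique (oppPair_symm h2) h1)
  have hmm : m2 ≠ m1 := by
    intro h; subst h
    exact hll (oppPair_left_unique h2 h1)
  refine ⟨l1, m1, l2, m2, h1, h2, hne1, hne2, hll, hlm, hml, hmm, ?_⟩
  -- closure: the olpOrdered set is exactly the four known pairs
  have hE : P.olpOrdered = {(l1, m1), (m1, l1), (l2, m2), (m2, l2)} := by
    refine (Finset.eq_of_subset_of_card_le ?_ ?_).symm
    · intro p hp
      simp only [Finset.mem_insert, Finset.mem_singleton] at hp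
      rcases hp with h | h | h | h <;> subst h
      · exact hp1
      · exact hp1s
      · exact hp2e2.2
      · exact mem_olp.mpr (oppPair_symm h2)
    · rw [hQ]
      rw [Finset.card_insert_of_notMem (by
            simp [Prod.ext_iff, hne1, hll, hml, Ne.symm hne1, Ne.symm hll, Ne.symm hml]),
        Finset.card_insert_of_notMem (by
            simp [Prod.ext_iff, hlm, hmm, Ne.symm hlm, Ne.symm hmm]),
        Finset.card_insert_of_notMem (by
            simp [Prod.ext_iff, hne2, Ne.symm hne2]),
        Finset.card_singleton]
  intro l m hlm'
  have hmem : (l, m) ∈ P.olpOrdered := mem_olp.mpr hlm'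
  rw [hE] at hmem
  simp only [Finset.mem_insert, Finset.mem_singleton, Prod.ext_iff] at hmem
  rcases hmem with ⟨_, h⟩ | ⟨_, h⟩ | ⟨_, h⟩ | ⟨_, h⟩ <;> subst h
  · intro x hx; exact Finset.mem_union_left _ (Finset.mem_union_right _ hx)
  · intro x hx; exact Finset.mem_union_left _ (Finset.mem_union_left _ hx)
  · intro x hx; exact Finset.mem_union_right _ (Finset.mem_union_right _ hx)
  · intro x hx; exact Finset.mem_union_right _ (Finset.mem_union_left _ hx)

/-- Points opposite to a point outside S are outside S. -/
lemma opp_notS {l1 m1 l2 m2 : Finset V} (h1 : P.OppPair l1 m1) (h2 : P.OppPair l2 m2)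
    {t : V} (ht : t ∉ (l1 ∪ m1) ∪ (l2 ∪ m2)) {a : V} (ha : a ∈ P.oppLine t) :
    a ∉ (l1 ∪ m1) ∪ (l2 ∪ m2) := by
  intro haS
  have hta : t ∈ P.oppLine a := oppLine_symm ha
  rcases Finset.mem_union.mp haS with h | h <;> rcases Finset.mem_union.mp h with h' | h'
  · rw [h1.2.2.2.1 a h'] at hta
    exact ht (Finset.mem_union_left _ (Finset.mem_union_right _ hta))
  · rw [h1.2.2.2.2 a h'] at hta
    exact ht (Finset.mem_union_left _ (Finset.mem_union_left _ hta))
  · rw [h2.2.2.2.1 a h'] at hta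
    exact ht (Finset.mem_union_right _ (Finset.mem_union_right _ hta))
  · rw [h2.2.2.2.2 a h'] at hta
    exact ht (Finset.mem_union_right _ (Finset.mem_union_left _ hta))

/-- Key per-point counting: any point outside S lies on at least 15 - r secant lines. -/
lemma key_t {l1 m1 l2 m2 : Finset V} (h1 : P.OppPair l1 m1) (h2 : P.OppPair l2 m2)
    (hclose : ∀ l m : Finset V, P.OppPair l m → m ⊆ (l1 ∪ m1) ∪ (l2 ∪ m2))
    (hS12 : ((l1 ∪ m1) ∪ (l2 ∪ m2)).card = 12)
    {t : V} (ht : t ∉ (l1 ∪ m1) ∪ (l2 ∪ m2)) :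
    15 - r ≤ (P.lines.filter
      (fun L => t ∈ L ∧ (L ∩ ((l1 ∪ m1) ∪ (l2 ∪ m2))).card = 2)).card := by
  set S := (l1 ∪ m1) ∪ (l2 ∪ m2) with hSdef
  set Lt := P.lines.filter (fun l => t ∈ l) with hLtdef
  have hLtcard : Lt.card = r := P.regular t
  -- the three lines through t coming from the deficiency structure
  set D := (P.oppLine t).image P.oppLine with hDdef
  have hinj : Set.InjOn P.oppLine (P.oppLine t : Set V) := by
    intro a ha b hb hab
    by_contra hne
    -- build an opposite line pair (oppLine t, oppLine a), contradicting closure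
    exfalso
    have ha' : a ∈ P.oppLine t := ha
    have hb' : b ∈ P.oppLine t := hb
    have hta : t ∈ P.oppLine a := oppLine_symm ha'
    have hstep : ∀ c ∈ P.oppLine a, P.oppLine c = P.oppLine t := by
      intro c hc
      have hac : a ∈ P.oppLine c := oppLine_symm hc
      have hbc : b ∈ P.oppLine c := oppLine_symm (hab ▸ hc)
      exact line_unique (oppLine_mem P c) (oppLine_mem P t) hne hac hbc ha' hb'
    have hpair : P.OppPair (P.oppLine t) (P.oppLine a) := by
      refine ⟨oppLine_mem P t, oppLine_mem P a, ?_, ?_, hstep⟩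
      · intro h
        exact not_mem_oppLine_self P t (h ▸ hta)
      · intro x hx
        have hsub : P.oppLine a ⊆ P.oppLine x := by
          intro c hc
          have := hstep c hc
          exact oppLine_symm (this ▸ hx)
        exact ((Finset.eq_of_subset_of_card_le hsub
          (by rw [card_oppLine, card_oppLine])).symm)
    exact ht (hclose _ _ hpair hta)
  have hDcard : D.card = 3 := by
    rw [hDdef, Finset.card_image_of_injOn hinj, card_oppLine]
  have hDLt : D ⊆ Lt := by
    intro L hL
    obtain ⟨a, ha, rfl⟩ := Finset.mem_image.mp hL
    exact Finset.mem_filter.mpr ⟨oppLine_mem P a, oppLine_symm ha⟩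
  have hD0 : ∀ L ∈ D, L ∩ S = ∅ := by
    intro L hL
    obtain ⟨a, ha, rfl⟩ := Finset.mem_image.mp hL
    have haS : a ∉ S := opp_notS h1 h2 ht ha
    rw [Finset.eq_empty_iff_forall_notMem]
    intro y hy
    exact opp_notS h1 h2 haS (Finset.mem_inter.mp hy).1 (Finset.mem_inter.mp hy).2
  -- sum of intersection sizes is 12
  have hdisjL : ∀ L ∈ Lt, ∀ L' ∈ Lt, L ≠ L' → Disjoint (L ∩ S) (L' ∩ S) := by
    intro L hL L' hL' hne
    rw [Finset.disjoint_left]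
    intro y hy hy'
    have hyS : y ∈ S := (Finset.mem_inter.mp hy).2
    have hyt : y ≠ t := fun h => ht (h ▸ hyS)
    exact hne (line_unique (Finset.mem_filter.mp hL).1 (Finset.mem_filter.mp hL').1 hyt.symm
      (Finset.mem_filter.mp hL).2 (Finset.mem_inter.mp hy).1
      (Finset.mem_filter.mp hL').2 (Finset.mem_inter.mp hy').1)
  have hcover : S = Lt.biUnion (fun L => L ∩ S) := by
    ext s
    simp only [Finset.mem_biUnion, Finset.mem_inter]
    constructor
    · intro hs
      have hst : s ≠ t := fun h => ht (h ▸ hs)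
      have hso : s ∉ P.oppLine t := fun h => opp_notS h1 h2 ht h hs
      obtain ⟨L, hL, htL, hsL⟩ := exists_line hst hso
      exact ⟨L, Finset.mem_filter.mpr ⟨hL, htL⟩, hsL, hs⟩
    · rintro ⟨L, _, _, hs⟩
      exact hs
  have h12 : ∑ L ∈ Lt, (L ∩ S).card = 12 := by
    rw [← Finset.card_biUnion hdisjL, ← hcover, hS12]
  have hle2 : ∀ L ∈ Lt, (L ∩ S).card ≤ 2 := by
    intro L hL
    have hsub : L ∩ S ⊆ L.erase t := by
      intro y hy
      exact Finset.mem_erase.mpr ⟨fun h => ht (h ▸ (Finset.mem_inter.mp hy).2),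
        (Finset.mem_inter.mp hy).1⟩
    calc (L ∩ S).card ≤ (L.erase t).card := Finset.card_le_card hsub
      _ = 2 := by
        rw [Finset.card_erase_of_mem (Finset.mem_filter.mp hL).2,
          P.uniform L (Finset.mem_filter.mp hL).1]
  set At := Lt.filter (fun L => (L ∩ S).card = 2) with hAtdef
  have hAtsub : At ⊆ Lt := Finset.filter_subset _ _
  have hDsub : D ⊆ Lt \ At := by
    intro L hL
    refine Finset.mem_sdiff.mpr ⟨hDLt hL, fun hmem => ?_⟩
    have := (Finset.mem_filter.mp hmem).2
    rw [hD0 L hL] at this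
    simp at this
  have hsplit1 : ∑ L ∈ Lt \ At, (L ∩ S).card + ∑ L ∈ At, (L ∩ S).card
      = ∑ L ∈ Lt, (L ∩ S).card := Finset.sum_sdiff hAtsub
  have hAtsum : ∑ L ∈ At, (L ∩ S).card = 2 * At.card := by
    rw [Finset.sum_congr rfl (fun L hL => (Finset.mem_filter.mp hL).2),
      Finset.sum_const, smul_eq_mul, mul_comm]
  have hsplit2 : ∑ L ∈ (Lt \ At) \ D, (L ∩ S).card + ∑ L ∈ D, (L ∩ S).card
      = ∑ L ∈ Lt \ At, (L ∩ S).card := Finset.sum_sdiff hDsub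
  have hDsum : ∑ L ∈ D, (L ∩ S).card = 0 :=
    Finset.sum_eq_zero (fun L hL => by rw [hD0 L hL]; rfl)
  have hrest : ∑ L ∈ (Lt \ At) \ D, (L ∩ S).card ≤ ((Lt \ At) \ D).card * 1 := by
    rw [← smul_eq_mul]
    refine Finset.sum_le_card_nsmul _ _ 1 (fun L hL => ?_)
    have hL1 := Finset.mem_sdiff.mp (Finset.mem_sdiff.mp hL).1
    have hne2' : (L ∩ S).card ≠ 2 := fun h => hL1.2 (Finset.mem_filter.mpr ⟨hL1.1, h⟩)
    have := hle2 L hL1.1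
    omega
  have hcard1 : (Lt \ At).card = r - At.card := by
    rw [Finset.card_sdiff_of_subset hAtsub, hLtcard]
  have hcard2 : ((Lt \ At) \ D).card = (Lt \ At).card - 3 := by
    rw [Finset.card_sdiff_of_subset hDsub, hDcard]
  have hAtle : At.card ≤ r := hLtcard ▸ Finset.card_le_card hAtsub
  have hDle : 3 ≤ (Lt \ At).card := hDcard ▸ Finset.card_le_card hDsub
  have hgoal : 15 - r ≤ At.card := by omega
  have heq : P.lines.filter (fun L => t ∈ L ∧ (L ∩ S).card = 2) = At := by
    rw [hAtdef, hLtdef, Finset.filter_filter]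
  rw [heq]
  exact hgoal
/-- There is no pentagonal geometry PENT(3,r) with exactly two opposite line
pairs for r ∈ {7, 9, 10, 12}.  (Exactly two unordered pairs means four ordered pairs.) -/
theorem stmt9 (r : ℕ) (hr : r ∈ ({7, 9, 10, 12} : Set ℕ))
    (V : Type) [Fintype V] [DecidableEq V] (P : PentGeom V 3 r) :
    P.olpOrdered.card ≠ 4 := by
  intro hQ
  obtain ⟨l1, m1, l2, m2, h1, h2, hne1, hne2, hll, hlm, hml, hmm, hclose⟩ := extract_pairs hQ
  -- disjointness of the four lines
  have hd1 : Disjoint l1 m1 := Finset.disjoint_left.mpr (fun {x} hx hx' =>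
    not_mem_oppLine_self P x (by rw [h1.2.2.2.1 x hx]; exact hx'))
  have hd2 : Disjoint l2 m2 := Finset.disjoint_left.mpr (fun {x} hx hx' =>
    not_mem_oppLine_self P x (by rw [h2.2.2.2.1 x hx]; exact hx'))
  have hd3 : Disjoint l1 l2 := Finset.disjoint_left.mpr (fun {x} hx hx' =>
    hmm ((h2.2.2.2.1 x hx').symm.trans (h1.2.2.2.1 x hx)))
  have hd4 : Disjoint l1 m2 := Finset.disjoint_left.mpr (fun {x} hx hx' =>
    hlm ((h2.2.2.2.2 x hx').symm.trans (h1.2.2.2.1 x hx)))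
  have hd5 : Disjoint m1 l2 := Finset.disjoint_left.mpr (fun {x} hx hx' =>
    hml ((h2.2.2.2.1 x hx').symm.trans (h1.2.2.2.2 x hx)))
  have hd6 : Disjoint m1 m2 := Finset.disjoint_left.mpr (fun {x} hx hx' =>
    hll ((h2.2.2.2.2 x hx').symm.trans (h1.2.2.2.2 x hx)))
  have hu1 : Disjoint (l1 ∪ m1) (l2 ∪ m2) := by
    simp only [Finset.disjoint_union_left, Finset.disjoint_union_right]
    exact ⟨⟨hd3, hd5⟩, hd4, hd6⟩
  have hc1 : (l1 ∪ m1).card = 6 := by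
    rw [Finset.card_union_of_disjoint hd1, P.uniform l1 h1.1, P.uniform m1 h1.2.1]
  have hc2 : (l2 ∪ m2).card = 6 := by
    rw [Finset.card_union_of_disjoint hd2, P.uniform l2 h2.1, P.uniform m2 h2.2.1]
  have hS12 : (((l1 ∪ m1) ∪ (l2 ∪ m2))).card = 12 := by
    rw [Finset.card_union_of_disjoint hu1, hc1, hc2]
  -- lower bound on the number of points
  obtain ⟨x, hx⟩ := line_nonempty h1.1
  have hVcard : 2 * r + 4 ≤ Fintype.card V := by
    have hdisjE : ∀ L ∈ P.lines.filter (fun l => x ∈ l),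
        ∀ L' ∈ P.lines.filter (fun l => x ∈ l), L ≠ L' →
        Disjoint (L.erase x) (L'.erase x) := by
      intro L hL L' hL' hne
      rw [Finset.disjoint_left]
      intro y hy hy'
      exact hne (line_unique (Finset.mem_filter.mp hL).1 (Finset.mem_filter.mp hL').1
        (Finset.mem_erase.mp hy).1.symm (Finset.mem_filter.mp hL).2
        (Finset.mem_erase.mp hy).2 (Finset.mem_filter.mp hL').2 (Finset.mem_erase.mp hy').2)
    have hLxcard : (P.lines.filter (fun l => x ∈ l)).card = r := P.regular x
    have hCcard : ((P.lines.filter (fun l => x ∈ l)).biUnion (fun L => L.erase x)).card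
        = 2 * r := by
      rw [Finset.card_biUnion hdisjE,
        Finset.sum_congr rfl (fun L hL => by
          rw [Finset.card_erase_of_mem (Finset.mem_filter.mp hL).2,
            P.uniform L (Finset.mem_filter.mp hL).1]),
        Finset.sum_const, smul_eq_mul, hLxcard, mul_comm]
    have hxC : x ∉ (P.lines.filter (fun l => x ∈ l)).biUnion (fun L => L.erase x) := by
      simp
    have hxm1 : x ∉ m1 := Finset.disjoint_left.mp hd1 hx
    have hCm1 : Disjoint ((P.lines.filter (fun l => x ∈ l)).biUnion (fun L => L.erase x)) m1 := by
      rw [Finset.disjoint_left]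
      intro y hy hym
      obtain ⟨L, hL, hyL⟩ := Finset.mem_biUnion.mp hy
      have hyo : y ∈ P.oppLine x := by rw [h1.2.2.2.1 x hx]; exact hym
      exact (mem_oppLine.mp hyo).2 L (Finset.mem_filter.mp hL).1
        ⟨(Finset.mem_filter.mp hL).2, (Finset.mem_erase.mp hyL).2⟩
    calc 2 * r + 4
        = (insert x (((P.lines.filter (fun l => x ∈ l)).biUnion (fun L => L.erase x)) ∪ m1)).card := by
          rw [Finset.card_insert_of_notMem (by
            simp only [Finset.mem_union, not_or]; exact ⟨hxC, hxm1⟩),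
            Finset.card_union_of_disjoint hCm1, hCcard, P.uniform m1 h1.2.1]
      _ ≤ Fintype.card V := by
          rw [← Finset.card_univ]
          exact Finset.card_le_card (Finset.subset_univ _)
  -- per-point bound
  have hkey : ∀ t ∈ (((l1 ∪ m1) ∪ (l2 ∪ m2)))ᶜ,
      15 - r ≤ (P.lines.filter (fun L => t ∈ L ∧ (L ∩ ((l1 ∪ m1) ∪ (l2 ∪ m2))).card = 2)).card :=
    fun t ht => key_t h1 h2 hclose hS12 (Finset.mem_compl.mp ht)
  -- disjointness of the secant pencils
  have hdisjA : ∀ t ∈ (((l1 ∪ m1) ∪ (l2 ∪ m2)))ᶜ, ∀ t' ∈ (((l1 ∪ m1) ∪ (l2 ∪ m2)))ᶜ, t ≠ t' →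
      Disjoint (P.lines.filter (fun L => t ∈ L ∧ (L ∩ ((l1 ∪ m1) ∪ (l2 ∪ m2))).card = 2))
        (P.lines.filter (fun L => t' ∈ L ∧ (L ∩ ((l1 ∪ m1) ∪ (l2 ∪ m2))).card = 2)) := by
    intro t ht t' ht' hne
    rw [Finset.disjoint_left]
    intro L hL hL'
    obtain ⟨hLl, htL, hcL⟩ := Finset.mem_filter.mp hL
    obtain ⟨_, htL', _⟩ := Finset.mem_filter.mp hL'
    have hsplit : (L ∩ ((l1 ∪ m1) ∪ (l2 ∪ m2))).card + (L \ ((l1 ∪ m1) ∪ (l2 ∪ m2))).card = L.card :=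
      Finset.card_inter_add_card_sdiff L (((l1 ∪ m1) ∪ (l2 ∪ m2)))
    have hsub2 : ({t, t'} : Finset V) ⊆ L \ ((l1 ∪ m1) ∪ (l2 ∪ m2)) := by
      intro y hy
      rcases Finset.mem_insert.mp hy with rfl | hy'
      · exact Finset.mem_sdiff.mpr ⟨htL, Finset.mem_compl.mp ht⟩
      · rw [Finset.mem_singleton.mp hy']
        exact Finset.mem_sdiff.mpr ⟨htL', Finset.mem_compl.mp ht'⟩
    have h2le : 2 ≤ (L \ ((l1 ∪ m1) ∪ (l2 ∪ m2))).card := by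
      calc 2 = ({t, t'} : Finset V).card := by
            rw [Finset.card_insert_of_notMem (by simp [hne]), Finset.card_singleton]
        _ ≤ (L \ ((l1 ∪ m1) ∪ (l2 ∪ m2))).card := Finset.card_le_card hsub2
    have hL3 : L.card = 3 := P.uniform L hLl
    omega
  -- the secants line count
  have hbi : (((((l1 ∪ m1) ∪ (l2 ∪ m2)))ᶜ).biUnion
        (fun t => P.lines.filter (fun L => t ∈ L ∧ (L ∩ ((l1 ∪ m1) ∪ (l2 ∪ m2))).card = 2))).card
      = ∑ t ∈ (((l1 ∪ m1) ∪ (l2 ∪ m2)))ᶜ, (P.lines.filter (fun L => t ∈ L ∧ (L ∩ ((l1 ∪ m1) ∪ (l2 ∪ m2))).card = 2)).card :=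
    Finset.card_biUnion hdisjA
  have hsubW : ((((l1 ∪ m1) ∪ (l2 ∪ m2)))ᶜ).biUnion
        (fun t => P.lines.filter (fun L => t ∈ L ∧ (L ∩ ((l1 ∪ m1) ∪ (l2 ∪ m2))).card = 2))
      ⊆ P.lines.filter (fun L => (L ∩ ((l1 ∪ m1) ∪ (l2 ∪ m2))).card = 2) := by
    intro L hL
    obtain ⟨t, _, hLt⟩ := Finset.mem_biUnion.mp hL
    obtain ⟨hLl, _, hcL⟩ := Finset.mem_filter.mp hLt
    exact Finset.mem_filter.mpr ⟨hLl, hcL⟩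
  -- at most 36 secant lines
  have hW36 : (P.lines.filter (fun L => (L ∩ ((l1 ∪ m1) ∪ (l2 ∪ m2))).card = 2)).card ≤ 36 := by
    have hsub : P.lines.filter (fun L => (L ∩ ((l1 ∪ m1) ∪ (l2 ∪ m2))).card = 2) ⊆
        ((l1 ∪ m1) ×ˢ (l2 ∪ m2)).biUnion
          (fun p => P.lines.filter (fun L => p.1 ∈ L ∧ p.2 ∈ L)) := by
      intro L hL
      obtain ⟨hLl, hc⟩ := Finset.mem_filter.mp hL
      obtain ⟨u, v, huv, heq⟩ := Finset.card_eq_two.mp hc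
      have hu : u ∈ L ∩ ((l1 ∪ m1) ∪ (l2 ∪ m2)) := by rw [heq]; simp
      have hv : v ∈ L ∩ ((l1 ∪ m1) ∪ (l2 ∪ m2)) := by rw [heq]; simp
      have huL : u ∈ L := (Finset.mem_inter.mp hu).1
      have hvL : v ∈ L := (Finset.mem_inter.mp hv).1
      have huS : u ∈ ((l1 ∪ m1) ∪ (l2 ∪ m2)) := (Finset.mem_inter.mp hu).2
      have hvS : v ∈ ((l1 ∪ m1) ∪ (l2 ∪ m2)) := (Finset.mem_inter.mp hv).2
      have same1 : ∀ {y z : V}, y ∈ L → z ∈ L → y ≠ z → y ∈ l1 ∪ m1 → z ∈ l1 ∪ m1 → False := by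
        intro y z hyL hzL hyz hy hz
        rcases Finset.mem_union.mp hy with hy' | hy' <;>
          rcases Finset.mem_union.mp hz with hz' | hz'
        · have hLe : L = l1 := line_unique hLl h1.1 hyz hyL hzL hy' hz'
          rw [hLe, Finset.inter_eq_left.mpr
            (fun w hw => Finset.mem_union_left _ (Finset.mem_union_left _ hw)),
            P.uniform l1 h1.1] at hc
          exact absurd hc (by norm_num)
        · have hmem : z ∈ P.oppLine y := by rw [h1.2.2.2.1 y hy']; exact hz'
          exact (mem_oppLine.mp hmem).2 L hLl ⟨hyL, hzL⟩
        · have hmem : y ∈ P.oppLine z := by rw [h1.2.2.2.1 z hz']; exact hy'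
          exact (mem_oppLine.mp hmem).2 L hLl ⟨hzL, hyL⟩
        · have hLe : L = m1 := line_unique hLl h1.2.1 hyz hyL hzL hy' hz'
          rw [hLe, Finset.inter_eq_left.mpr
            (fun w hw => Finset.mem_union_left _ (Finset.mem_union_right _ hw)),
            P.uniform m1 h1.2.1] at hc
          exact absurd hc (by norm_num)
      have same2 : ∀ {y z : V}, y ∈ L → z ∈ L → y ≠ z → y ∈ l2 ∪ m2 → z ∈ l2 ∪ m2 → False := by
        intro y z hyL hzL hyz hy hz
        rcases Finset.mem_union.mp hy with hy' | hy' <;>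
          rcases Finset.mem_union.mp hz with hz' | hz'
        · have hLe : L = l2 := line_unique hLl h2.1 hyz hyL hzL hy' hz'
          rw [hLe, Finset.inter_eq_left.mpr
            (fun w hw => Finset.mem_union_right _ (Finset.mem_union_left _ hw)),
            P.uniform l2 h2.1] at hc
          exact absurd hc (by norm_num)
        · have hmem : z ∈ P.oppLine y := by rw [h2.2.2.2.1 y hy']; exact hz'
          exact (mem_oppLine.mp hmem).2 L hLl ⟨hyL, hzL⟩
        · have hmem : y ∈ P.oppLine z := by rw [h2.2.2.2.1 z hz']; exact hy'
          exact (mem_oppLine.mp hmem).2 L hLl ⟨hzL, hyL⟩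
        · have hLe : L = m2 := line_unique hLl h2.2.1 hyz hyL hzL hy' hz'
          rw [hLe, Finset.inter_eq_left.mpr
            (fun w hw => Finset.mem_union_right _ (Finset.mem_union_right _ hw)),
            P.uniform m2 h2.2.1] at hc
          exact absurd hc (by norm_num)
      rcases Finset.mem_union.mp huS with hu' | hu' <;>
        rcases Finset.mem_union.mp hvS with hv' | hv'
      · exact (same1 huL hvL huv hu' hv').elim
      · exact Finset.mem_biUnion.mpr ⟨(u, v), Finset.mem_product.mpr ⟨hu', hv'⟩,
          Finset.mem_filter.mpr ⟨hLl, huL, hvL⟩⟩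
      · exact Finset.mem_biUnion.mpr ⟨(v, u), Finset.mem_product.mpr ⟨hv', hu'⟩,
          Finset.mem_filter.mpr ⟨hLl, hvL, huL⟩⟩
      · exact (same2 huL hvL huv hu' hv').elim
    refine le_trans (Finset.card_le_card hsub) (le_trans Finset.card_biUnion_le ?_)
    calc ∑ p ∈ (l1 ∪ m1) ×ˢ (l2 ∪ m2), (P.lines.filter (fun L => p.1 ∈ L ∧ p.2 ∈ L)).card
        ≤ ∑ _p ∈ (l1 ∪ m1) ×ˢ (l2 ∪ m2), 1 := by
          refine Finset.sum_le_sum (fun p hp => ?_)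
          have hp' := Finset.mem_product.mp hp
          have hpn : p.1 ≠ p.2 := fun h =>
            Finset.disjoint_left.mp hu1 hp'.1 (h ▸ hp'.2)
          exact P.pairwise p.1 p.2 hpn
      _ = 36 := by
          rw [Finset.sum_const, smul_eq_mul, mul_one, Finset.card_product, hc1, hc2]
  -- put everything together
  have hlow : ((((l1 ∪ m1) ∪ (l2 ∪ m2)))ᶜ).card • (15 - r)
      ≤ ∑ t ∈ (((l1 ∪ m1) ∪ (l2 ∪ m2)))ᶜ, (P.lines.filter (fun L => t ∈ L ∧ (L ∩ ((l1 ∪ m1) ∪ (l2 ∪ m2))).card = 2)).card :=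
    Finset.card_nsmul_le_sum _ _ _ hkey
  have hTcard : ((((l1 ∪ m1) ∪ (l2 ∪ m2)))ᶜ).card = Fintype.card V - 12 := by
    rw [Finset.card_compl, hS12]
  have hchain : ((((l1 ∪ m1) ∪ (l2 ∪ m2)))ᶜ).card * (15 - r) ≤ 36 := by
    calc ((((l1 ∪ m1) ∪ (l2 ∪ m2)))ᶜ).card * (15 - r) = ((((l1 ∪ m1) ∪ (l2 ∪ m2)))ᶜ).card • (15 - r) := by rw [smul_eq_mul]
      _ ≤ ∑ t ∈ (((l1 ∪ m1) ∪ (l2 ∪ m2)))ᶜ, (P.lines.filter (fun L => t ∈ L ∧ (L ∩ ((l1 ∪ m1) ∪ (l2 ∪ m2))).card = 2)).card := hlow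
      _ = (((((l1 ∪ m1) ∪ (l2 ∪ m2)))ᶜ).biUnion
            (fun t => P.lines.filter (fun L => t ∈ L ∧ (L ∩ ((l1 ∪ m1) ∪ (l2 ∪ m2))).card = 2))).card := hbi.symm
      _ ≤ (P.lines.filter (fun L => (L ∩ ((l1 ∪ m1) ∪ (l2 ∪ m2))).card = 2)).card := Finset.card_le_card hsubW
      _ ≤ 36 := hW36
  simp only [Set.mem_insert_iff, Set.mem_singleton_iff] at hr
  rcases hr with rfl | rfl | rfl | rfl <;> omega


end Main
end
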